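/- There are no integers x, y, z with x^4 + y^4 + z^4 - 2x^2y^2 - 2y^2z^2 - 2z^2x^2 = 4. -/

import Mathlib

/-!
Up to sign the quartic form is Heron's product `(x+y+z)(-x+y+z)(x-y+z)(x+y-z)`. Its four factors
are `s, s - 2x, s - 2y, s - 2z` with `s = x + y + z`, so they share the parity of `s`: the product
is odd or divisible by `2⁴ = 16`, and is never `-4`.
-/

theorem quartic_form_eq_neg_heron (x y z : ℤ) :
    x^4 + y^4 + z^4 - 2*x^2*y^2 - 2*y^2*z^2 - 2*z^2*x^2 =
      -((x + y + z) * ((x + y + z) - 2*x) * ((x + y + z) - 2*y) * ((x + y + z) - 2*z)) := by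
  ring

theorem Int.odd_or_sixteen_dvd_mul_sub_two_mul (s x y z : ℤ) :
    Odd (s * (s - 2*x) * (s - 2*y) * (s - 2*z)) ∨ 16 ∣ s * (s - 2*x) * (s - 2*y) * (s - 2*z) := by
  rcases Int.even_or_odd s with ⟨t, rfl⟩ | hs
  · exact Or.inr ⟨t * (t - x) * (t - y) * (t - z), by ring⟩
  · have hsub (w : ℤ) : Odd (s - 2*w) := hs.sub_even (even_two_mul w)
    exact Or.inl (((hs.mul (hsub x)).mul (hsub y)).mul (hsub z))

theorem stmt11 :
    ¬ ∃ x y z : ℤ, x^4 + y^4 + z^4 - 2*x^2*y^2 - 2*y^2*z^2 - 2*z^2*x^2 = 4 := by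
  rintro ⟨x, y, z, h⟩
  rw [quartic_form_eq_neg_heron] at h
  have hprod : (x + y + z) * ((x + y + z) - 2*x) * ((x + y + z) - 2*y) * ((x + y + z) - 2*z) = -4 := by
    linarith
  rcases Int.odd_or_sixteen_dvd_mul_sub_two_mul (x + y + z) x y z with hodd | hdvd
  · rw [hprod] at hodd
    exact absurd hodd (by decide)
  · rw [hprod] at hdvd
    exact absurd hdvd (by decide)
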